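/- arXiv:2110.09411 — 3 statements merged into one kernel-verified Lean document; each statement's English description precedes it below -/
import Mathlib

section
/- For all n, r, v ∈ ℕ₀ and all ω, x, z ∈ ℂ, the two-index summation formula _Tℬ^{(c,v)}_{n+r,μ}(ω,z;λ) = Σ_{ℓ=0}^{n} Σ_{m=0}^{r} binomial(n,ℓ) · binomial(r,m) · (ω−x)^{ℓ+m} · _Tℬ^{(c,v)}_{n+r−ℓ−m,μ}(x,z;λ) holds. -/
/-!
Parametric kinds of generalized Apostol–Bernoulli polynomials (Özat–Çekim–Kızılateş–Qi).
All generating functions are formal power series in `t` over `ℂ`; each polynomial family is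
`n!` times the `n`-th coefficient of its generating series.
-/

open PowerSeries

noncomputable section

/-- The formal power series `t / (λ eᵗ + μ)`. -/
def bker (lam mu : ℂ) : ℂ⟦X⟧ := X * (C lam * exp ℂ + C mu)⁻¹

/-- The formal power series `e^{x t}`. -/
def expS (x : ℂ) : ℂ⟦X⟧ := rescale x (exp ℂ)

/-- The formal power series `cos (z t)`. -/
def cosS (z : ℂ) : ℂ⟦X⟧ := rescale z (cos ℂ)

/-- The formal power series `sin (z t)`. -/
def sinS (z : ℂ) : ℂ⟦X⟧ := rescale z (sin ℂ)

/-- Parametric (cosine) kind of generalized Apostol–Bernoulli polynomials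
`_Tℬ^{(c,v)}_{n,μ}(x,z;λ)`, defined by
`(t/(λeᵗ+μ))^v e^{xt} U(t) cos(zt) = Σ_n _Tℬ^{(c,v)}_{n,μ}(x,z;λ) tⁿ/n!`. -/
def TBc (lam mu : ℂ) (U : ℂ⟦X⟧) (v n : ℕ) (x z : ℂ) : ℂ :=
  n.factorial * coeff n (bker lam mu ^ v * expS x * U * cosS z)

/-- Parametric (sine) kind of generalized Apostol–Bernoulli polynomials
`_Tℬ^{(s,v)}_{n,μ}(x,z;λ)`, defined by
`(t/(λeᵗ+μ))^v e^{xt} U(t) sin(zt) = Σ_n _Tℬ^{(s,v)}_{n,μ}(x,z;λ) tⁿ/n!`. -/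
def TBs (lam mu : ℂ) (U : ℂ⟦X⟧) (v n : ℕ) (x z : ℂ) : ℂ :=
  n.factorial * coeff n (bker lam mu ^ v * expS x * U * sinS z)

/-- `_Tℬ^{(v)}_{n,μ}(x;λ)`, defined by
`(t/(λeᵗ+μ))^v e^{xt} U(t) = Σ_n _Tℬ^{(v)}_{n,μ}(x;λ) tⁿ/n!`. -/
def TB (lam mu : ℂ) (U : ℂ⟦X⟧) (v n : ℕ) (x : ℂ) : ℂ :=
  n.factorial * coeff n (bker lam mu ^ v * expS x * U)

/-- Cosine generalized Apostol–Bernoulli polynomials `ℬ^{(c,v)}_{n,μ}(x,z;λ)`, defined by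
`(t/(λeᵗ+μ))^v e^{xt} cos(zt) = Σ_n ℬ^{(c,v)}_{n,μ}(x,z;λ) tⁿ/n!`. -/
def Bc (lam mu : ℂ) (v n : ℕ) (x z : ℂ) : ℂ :=
  n.factorial * coeff n (bker lam mu ^ v * expS x * cosS z)

/-- Sine generalized Apostol–Bernoulli polynomials `ℬ^{(s,v)}_{n,μ}(x,z;λ)`. -/
def Bs (lam mu : ℂ) (v n : ℕ) (x z : ℂ) : ℂ :=
  n.factorial * coeff n (bker lam mu ^ v * expS x * sinS z)

/-- Generalized Apostol–Bernoulli polynomials of order `v`: `ℬ^{(v)}_{n,μ}(x;λ)`, defined by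
`(t/(λeᵗ+μ))^v e^{xt} = Σ_n ℬ^{(v)}_{n,μ}(x;λ) tⁿ/n!`. -/
def Bpoly (lam mu : ℂ) (v n : ℕ) (x : ℂ) : ℂ :=
  n.factorial * coeff n (bker lam mu ^ v * expS x)

/-- Generalized Apostol–Bernoulli numbers `ℬ^{(v)}_{n,μ}(λ) := ℬ^{(v)}_{n,μ}(0;λ)`. -/
def Bnum (lam mu : ℂ) (v n : ℕ) : ℂ := Bpoly lam mu v n 0

/-- The 2-variable general polynomials `T_n(x)`, defined by `e^{xt} U(t) = Σ_n T_n(x) tⁿ/n!`. -/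
def Tpoly (U : ℂ⟦X⟧) (n : ℕ) (x : ℂ) : ℂ := n.factorial * coeff n (expS x * U)

/-- `U_n := n!` times the `n`-th coefficient of `U`. -/
def Unum (U : ℂ⟦X⟧) (n : ℕ) : ℂ := n.factorial * coeff n U

/-- `C_n(x,y)`, defined by `e^{xt} cos(yt) = Σ_n C_n(x,y) tⁿ/n!`. -/
def Cpoly (n : ℕ) (x y : ℂ) : ℂ := n.factorial * coeff n (expS x * cosS y)

/-- `S_n(x,y)`, defined by `e^{xt} sin(yt) = Σ_n S_n(x,y) tⁿ/n!`. -/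
def Spoly (n : ℕ) (x y : ℂ) : ℂ := n.factorial * coeff n (expS x * sinS y)

/-- Apostol–Bernoulli numbers of order `δ`: `ℬ^{(δ)}_n(Λ)`, defined by
`(t/(Λeᵗ−1))^δ = Σ_n ℬ^{(δ)}_n(Λ) tⁿ/n!`. -/
def ABnum (L : ℂ) (d n : ℕ) : ℂ :=
  n.factorial * coeff n ((X * (C L * exp ℂ - 1)⁻¹) ^ d)

/-- Generalized Apostol–Genocchi polynomials `𝒢^{(v)}_{n,μ}(x;λ)`, defined by
`(2t/(λeᵗ+μ))^v e^{xt} = Σ_n 𝒢^{(v)}_{n,μ}(x;λ) tⁿ/n!`. -/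
def Gpoly (lam mu : ℂ) (v n : ℕ) (x : ℂ) : ℂ :=
  n.factorial * coeff n ((C 2 * X * (C lam * exp ℂ + C mu)⁻¹) ^ v * expS x)

end

/-!
Since `e^{ωt} = e^{(ω-x)t} e^{xt}`, the generating function at `ω` is `e^{(ω-x)t}` times the one
at `x`, so `TBc_N(ω) = Σ_k C(N,k) (ω-x)^k TBc_{N-k}(x)`. For `N = n + r`, Vandermonde's identity
`C(n+r,k) = Σ_{l+m=k} C(n,l) C(r,m)` splits this single sum into the double sum.
-/

open Finset

theorem expS_add (a b : ℂ) : expS (a + b) = expS a * expS b := by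
  rw [expS, expS, expS, exp_mul_exp_eq_exp_add]

theorem coeff_expS (a : ℂ) (k : ℕ) : coeff k (expS a) = a ^ k / k.factorial := by
  simp [expS, coeff_exp, div_eq_mul_inv]

theorem factorial_mul_coeff_expS_mul (a : ℂ) (F : ℂ⟦X⟧) (N : ℕ) :
    N.factorial * coeff N (expS a * F)
      = ∑ k ∈ range (N + 1), (N.choose k : ℂ) * a ^ k * ((N - k).factorial * coeff (N - k) F) := by
  rw [coeff_mul, Nat.sum_antidiagonal_eq_sum_range_succ_mk, mul_sum]
  refine sum_congr rfl fun k hk => ?_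
  have hfact : (N.factorial : ℂ) = N.choose k * k.factorial * (N - k).factorial := by
    rw_mod_cast [Nat.choose_mul_factorial_mul_factorial (mem_range_succ_iff.mp hk)]
  have hk : (k.factorial : ℂ) ≠ 0 := Nat.cast_ne_zero.mpr k.factorial_ne_zero
  rw [coeff_expS, hfact]
  field_simp

theorem TBc_add (lam mu : ℂ) (U : ℂ⟦X⟧) (v N : ℕ) (x h z : ℂ) :
    TBc lam mu U v N (x + h) z
      = ∑ k ∈ range (N + 1), (N.choose k : ℂ) * h ^ k * TBc lam mu U v (N - k) x z := by
  have hshift : bker lam mu ^ v * expS (x + h) * U * cosS z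
      = expS h * (bker lam mu ^ v * expS x * U * cosS z) := by
    rw [expS_add]; ring
  rw [TBc, hshift, factorial_mul_coeff_expS_mul]
  rfl

theorem sum_range_add_choose_mul {R : Type*} [CommSemiring R] (n r : ℕ) (g : ℕ → R) :
    ∑ k ∈ range (n + r + 1), ((n + r).choose k : R) * g k
      = ∑ l ∈ range (n + 1), ∑ m ∈ range (r + 1), (n.choose l : R) * r.choose m * g (l + m) := by
  set F : ℕ × ℕ → R := fun p => (n.choose p.1 : R) * r.choose p.2 * g (p.1 + p.2)
  have hvandermonde : ∀ k, ((n + r).choose k : R) * g k = ∑ p ∈ antidiagonal k, F p := by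
    intro k
    rw [Nat.add_choose_eq, Nat.cast_sum, sum_mul]
    refine sum_congr rfl fun p hp => ?_
    rw [← mem_antidiagonal.mp hp, Nat.cast_mul]
  have hvanish : ∀ p ∈ (range (n + r + 1)).biUnion antidiagonal,
      p ∉ range (n + 1) ×ˢ range (r + 1) → F p = 0 := by
    intro p _ hp
    simp only [mem_product, mem_range, not_and_or, not_lt] at hp
    rcases hp with hl | hm
    · simp [F, Nat.choose_eq_zero_of_lt (Nat.lt_of_succ_le hl)]
    · simp [F, Nat.choose_eq_zero_of_lt (Nat.lt_of_succ_le hm)]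
  have hsub : range (n + 1) ×ˢ range (r + 1) ⊆ (range (n + r + 1)).biUnion antidiagonal := by
    intro p hp
    rw [mem_product, mem_range, mem_range] at hp
    exact mem_biUnion.mpr ⟨p.1 + p.2, mem_range.mpr (by omega), mem_antidiagonal.mpr rfl⟩
  have hdisjoint :
      Set.PairwiseDisjoint ↑(range (n + r + 1)) (antidiagonal : ℕ → Finset (ℕ × ℕ)) :=
    fun a _ b _ hab => disjoint_left.mpr fun p hpa hpb =>
      hab ((mem_antidiagonal.mp hpa).symm.trans (mem_antidiagonal.mp hpb))
  calc ∑ k ∈ range (n + r + 1), ((n + r).choose k : R) * g k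
      = ∑ k ∈ range (n + r + 1), ∑ p ∈ antidiagonal k, F p :=
        sum_congr rfl fun k _ => hvandermonde k
    _ = ∑ p ∈ (range (n + r + 1)).biUnion antidiagonal, F p := (sum_biUnion hdisjoint).symm
    _ = ∑ p ∈ range (n + 1) ×ˢ range (r + 1), F p := (sum_subset hsub hvanish).symm
    _ = _ := sum_product _ _ _

theorem stmt6_general (lam mu : ℂ) (U : ℂ⟦X⟧)
    (n r v : ℕ) (ω x z : ℂ) :
    TBc lam mu U v (n + r) ω z
      = ∑ l ∈ Finset.range (n + 1), ∑ m ∈ Finset.range (r + 1),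
          (n.choose l : ℂ) * (r.choose m : ℂ) * (ω - x) ^ (l + m) *
            TBc lam mu U v (n + r - l - m) x z := by
  have hω : ω = x + (ω - x) := by ring
  rw [hω, TBc_add, add_sub_cancel_left]
  simp_rw [mul_assoc]
  rw [sum_range_add_choose_mul n r fun k => (ω - x) ^ k * TBc lam mu U v (n + r - k) x z]
  simp_rw [mul_assoc, Nat.sub_sub]

theorem stmt6 (lam mu : ℂ) (hlm : lam + mu ≠ 0) (U : ℂ⟦X⟧) (hU : PowerSeries.coeff 0 U ≠ 0)
    (n r v : ℕ) (ω x z : ℂ) :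
    TBc lam mu U v (n + r) ω z
      = ∑ l ∈ Finset.range (n + 1), ∑ m ∈ Finset.range (r + 1),
          (n.choose l : ℂ) * (r.choose m : ℂ) * (ω - x) ^ (l + m) *
            TBc lam mu U v (n + r - l - m) x z :=
  stmt6_general lam mu U n r v ω x z
end

section
/- For all v, α, n ∈ ℕ₀ and all x, z ∈ ℂ, the order-addition formula _Tℬ^{(s,v+α)}_{n,μ}(x,z;λ) = Σ_{r=0}^{n} binomial(n,r) · ℬ^{(v)}_{r,μ}(λ) · _Tℬ^{(s,α)}_{n−r,μ}(x,z;λ) holds. -/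
/-!
Parametric kinds of generalized Apostol–Bernoulli polynomials (Özat–Çekim–Kızılateş–Qi).
All generating functions are formal power series in `t` over `ℂ`; each polynomial family is
`n!` times the `n`-th coefficient of its generating series.
-/

open PowerSeries

theorem PowerSeries.factorial_mul_coeff_mul {R : Type*} [CommSemiring R] (f g : R⟦X⟧) (n : ℕ) :
    (n.factorial : R) * coeff n (f * g)
      = ∑ r ∈ Finset.range (n + 1),
          (n.choose r : R) * (r.factorial * coeff r f) * ((n - r).factorial * coeff (n - r) g) := by
  rw [coeff_mul, Finset.Nat.sum_antidiagonal_eq_sum_range_succ (fun i j => coeff i f * coeff j g),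
    Finset.mul_sum]
  refine Finset.sum_congr rfl fun r hr => ?_
  have hfac : (n.choose r : R) * r.factorial * (n - r).factorial = n.factorial := by
    rw [← Nat.cast_mul, ← Nat.cast_mul,
      Nat.choose_mul_factorial_mul_factorial (Finset.mem_range_succ_iff.mp hr)]
  rw [← hfac]
  ring

theorem expS_zero : expS 0 = 1 := by
  simp [expS, rescale_zero]

theorem stmt8_general (lam mu : ℂ) (U : ℂ⟦X⟧)
    (v α n : ℕ) (x z : ℂ) :
    TBs lam mu U (v + α) n x z
      = ∑ r ∈ Finset.range (n + 1),
          (n.choose r : ℂ) * Bnum lam mu v r * TBs lam mu U α (n - r) x z := by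
  have hsplit : bker lam mu ^ (v + α) * expS x * U * sinS z
      = (bker lam mu ^ v * expS 0) * (bker lam mu ^ α * expS x * U * sinS z) := by
    rw [pow_add, expS_zero]
    ring
  rw [TBs, hsplit, factorial_mul_coeff_mul]
  rfl

theorem stmt8 (lam mu : ℂ) (hlm : lam + mu ≠ 0) (U : ℂ⟦X⟧) (hU : PowerSeries.coeff 0 U ≠ 0)
    (v α n : ℕ) (x z : ℂ) :
    TBs lam mu U (v + α) n x z
      = ∑ r ∈ Finset.range (n + 1),
          (n.choose r : ℂ) * Bnum lam mu v r * TBs lam mu U α (n - r) x z :=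
  stmt8_general lam mu U v α n x z
end

section
/- Assume additionally μ ≠ 0. Let v, δ ∈ ℕ₀ with δ ≤ v, let m, n ∈ ℕ with n ≥ m, and let x, z ∈ ℂ. Then the m-th partial derivative with respect to x of _Tℬ^{(s,v)}_{n,μ}(x,z;λ) equals m! · (−μ)^{−δ} · Σ_{r=0}^{n−m} binomial(n,r) · binomial(n−r,m) · ℬ^{(δ)}_{r}(−λ/μ) · _Tℬ^{(s,v−δ)}_{n−r−m,μ}(x,z;λ). (Note that λ + μ ≠ 0 guarantees −λ/μ ≠ 1.) -/
/-!
Parametric kinds of generalized Apostol–Bernoulli polynomials (Özat–Çekim–Kızılateş–Qi).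
All generating functions are formal power series in `t` over `ℂ`; each polynomial family is
`n!` times the `n`-th coefficient of its generating series.
-/

open PowerSeries

/-!
Since `∂ₓ e^{xt} = t e^{xt}`, differentiating `m` times in `x` lowers the index of the
generating-function coefficient by `m`. As `t/(λeᵗ+μ) = (-μ)⁻¹ · t/(Λeᵗ-1)` with `Λ = -λ/μ`,
the kernel of order `v` splits into `(-μ)^{-δ}` times the Apostol–Bernoulli kernel of order `δ`
times the kernel of order `v - δ`, and the binomial convolution of exponential generating
functions yields the sum.
-/

lemma coeff_expS_s17 (x : ℂ) (i : ℕ) : coeff i (expS x) = x ^ i / i.factorial := by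
  simp [expS, coeff_rescale, coeff_exp, div_eq_mul_inv]

lemma hasDerivAt_coeff_expS (i : ℕ) (x : ℂ) :
    HasDerivAt (fun y => coeff i (expS y)) (coeff i (X * expS x)) x := by
  simp only [coeff_expS_s17]
  cases i with
  | zero => simpa using hasDerivAt_const x (1 : ℂ)
  | succ j =>
    rw [coeff_succ_X_mul, coeff_expS_s17]
    refine ((hasDerivAt_pow (j + 1) x).div_const _).congr_deriv ?_
    rw [Nat.factorial_succ]
    push_cast
    field_simp

lemma hasDerivAt_coeff_expS_mul (F : ℂ⟦X⟧) (k : ℕ) (x : ℂ) :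
    HasDerivAt (fun y => coeff (k + 1) (expS y * F)) (coeff k (expS x * F)) x := by
  rw [← coeff_succ_X_mul, ← mul_assoc]
  simp only [coeff_mul _ _ F]
  exact HasDerivAt.fun_sum fun p _ => (hasDerivAt_coeff_expS p.1 x).mul_const _

lemma iteratedDeriv_coeff_expS_mul (F : ℂ⟦X⟧) (k m : ℕ) :
    iteratedDeriv m (fun y => coeff (k + m) (expS y * F)) = fun y => coeff k (expS y * F) := by
  induction m with
  | zero => simp
  | succ m ih =>
    rw [iteratedDeriv_succ', ← ih]
    congr 1
    funext y
    exact (hasDerivAt_coeff_expS_mul F (k + m) y).deriv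

lemma factorial_eq_choose_mul_choose {n m r : ℕ} (hr : r + m ≤ n) :
    n.factorial = m.factorial * n.choose r * (n - r).choose m * r.factorial *
      (n - r - m).factorial := by
  rw [← Nat.choose_mul_factorial_mul_factorial (n := n) (k := r) (by omega),
    ← Nat.choose_mul_factorial_mul_factorial (n := n - r) (k := m) (by omega)]
  ring

lemma factorial_mul_coeff_mul_eq_sum {R : Type*} [CommSemiring R] (A B : R⟦X⟧) {m n : ℕ}
    (hmn : m ≤ n) :
    (n.factorial : R) * coeff (n - m) (A * B) =
      m.factorial * ∑ r ∈ Finset.range (n - m + 1),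
        (n.choose r : R) * (n - r).choose m * (r.factorial * coeff r A) *
          ((n - r - m).factorial * coeff (n - r - m) B) := by
  rw [coeff_mul, Finset.Nat.sum_antidiagonal_eq_sum_range_succ_mk, Finset.mul_sum, Finset.mul_sum]
  refine Finset.sum_congr rfl fun r hr => ?_
  have hr : r + m ≤ n := by rw [Finset.mem_range] at hr; omega
  rw [show n - m - r = n - r - m by omega, factorial_eq_choose_mul_choose hr]
  push_cast
  ring

noncomputable def abKer (L : ℂ) : ℂ⟦X⟧ := X * (C L * exp ℂ - 1)⁻¹

lemma bker_eq_C_mul_abKer (lam : ℂ) {mu : ℂ} (hmu : mu ≠ 0) :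
    bker lam mu = C (-mu)⁻¹ * abKer (-lam / mu) := by
  have hden : C (-lam / mu) * exp ℂ - 1 = C (-mu)⁻¹ * (C lam * exp ℂ + C mu) := by
    simp only [mul_add, ← mul_assoc, ← map_mul]
    rw [show (-mu)⁻¹ * lam = -lam / mu by field_simp, show (-mu)⁻¹ * mu = -1 by field_simp,
      map_neg, map_one]
    ring
  have hC : C (-mu)⁻¹ * C (-mu) = (1 : ℂ⟦X⟧) := by
    rw [← map_mul, inv_mul_cancel₀ (neg_ne_zero.mpr hmu), map_one]
  rw [bker, abKer, hden, PowerSeries.mul_inv_rev, PowerSeries.C_inv, inv_inv]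
  linear_combination (X * (C lam * exp ℂ + C mu)⁻¹) * hC.symm

lemma TBs_eq_coeff_expS_mul (lam mu : ℂ) (U : ℂ⟦X⟧) (v n : ℕ) (x z : ℂ) :
    TBs lam mu U v n x z = n.factorial * coeff n (expS x * (bker lam mu ^ v * U * sinS z)) := by
  rw [TBs]
  ring_nf

theorem stmt17_general (lam mu : ℂ) (U : ℂ⟦X⟧)
    (hmu : mu ≠ 0) (v δ : ℕ) (hδ : δ ≤ v) (m n : ℕ) (hmn : m ≤ n) (x z : ℂ) :
    iteratedDeriv m (fun x : ℂ => TBs lam mu U v n x z) x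
      = (m.factorial : ℂ) * (-mu) ^ (-(δ : ℤ)) *
          ∑ r ∈ Finset.range (n - m + 1),
            (n.choose r : ℂ) * ((n - r).choose m : ℂ) * ABnum (-lam / mu) δ r *
              TBs lam mu U (v - δ) (n - r - m) x z := by
  set G := fun w => bker lam mu ^ w * U * sinS z
  have hsplit :
      expS x * G v = C ((-mu)⁻¹ ^ δ) * (abKer (-lam / mu) ^ δ * (expS x * G (v - δ))) := by
    rw [← Nat.add_sub_cancel' hδ]
    simp only [G, pow_add, bker_eq_C_mul_abKer lam hmu, mul_pow, map_pow, Nat.add_sub_cancel_left]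
    ring
  have hderiv : iteratedDeriv m (fun x => TBs lam mu U v n x z) x =
      n.factorial * coeff (n - m) (expS x * G v) := by
    simp only [TBs_eq_coeff_expS_mul, iteratedDeriv_const_mul_field]
    rw [← Nat.sub_add_cancel hmn, iteratedDeriv_coeff_expS_mul, Nat.sub_add_cancel hmn]
  rw [hderiv, hsplit, coeff_C_mul, mul_left_comm,
    factorial_mul_coeff_mul_eq_sum _ _ hmn]
  simp only [TBs_eq_coeff_expS_mul, ABnum, abKer, zpow_neg, zpow_natCast, inv_pow, G]
  ring

theorem stmt17 (lam mu : ℂ) (hlm : lam + mu ≠ 0) (U : ℂ⟦X⟧) (hU : PowerSeries.coeff 0 U ≠ 0)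
    (hmu : mu ≠ 0) (v δ : ℕ) (hδ : δ ≤ v) (m n : ℕ) (hm : 1 ≤ m) (hmn : m ≤ n) (x z : ℂ) :
    iteratedDeriv m (fun x : ℂ => TBs lam mu U v n x z) x
      = (m.factorial : ℂ) * (-mu) ^ (-(δ : ℤ)) *
          ∑ r ∈ Finset.range (n - m + 1),
            (n.choose r : ℂ) * ((n - r).choose m : ℂ) * ABnum (-lam / mu) δ r *
              TBs lam mu U (v - δ) (n - r - m) x z :=
  stmt17_general lam mu U hmu v δ hδ m n hmn x z
end
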